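/- arXiv:2204.05565 — 6 statements merged into one kernel-verified Lean document; each statement's English description precedes it below -/
import Mathlib

section
/- Let Φ : U → (0,4) be a smooth function on an open set U ⊆ ℂ satisfying dΦ = (Φ(4−Φ)/4)(η dz + \overline{η} d\overline{z}) for a nonvanishing holomorphic function η on U. Then the conformal metric g = (Φ(4−Φ)/4)|η|² |dz|² on U has constant Gaussian curvature 1. -/
open Complex Set

/-- The (real) Laplacian of `φ : ℂ → ℝ`, equal to `4 ∂²φ/∂z∂z̄` for smooth `φ`. -/
noncomputable def lap (φ : ℂ → ℝ) (z : ℂ) : ℝ :=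
  fderiv ℝ (fun w => fderiv ℝ φ w 1) z 1 +
    fderiv ℝ (fun w => fderiv ℝ φ w Complex.I) z Complex.I

/-- if `dΦ = (Φ(4−Φ)/4)(η dz + η̄ dz̄)` with `η` holomorphic nonvanishing,
then the metric `(Φ(4−Φ)/4)|η|²|dz|²` has constant Gaussian curvature `1`. -/
theorem stmt2 (U : Set ℂ) (hU : IsOpen U)
    (η : ℂ → ℂ) (hη : DifferentiableOn ℂ η U) (hη0 : ∀ z ∈ U, η z ≠ 0)
    (Φ : ℂ → ℝ) (hΦrange : ∀ z ∈ U, Φ z ∈ Ioo (0:ℝ) 4)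
    (hΦsmooth : ContDiffOn ℝ (⊤ : ℕ∞) Φ U)
    (hODE : ∀ z ∈ U, ∀ v : ℂ,
      fderiv ℝ Φ z v = (Φ z * (4 - Φ z) / 2) * (η z * v).re) :
    let φ : ℂ → ℝ := fun z =>
      Real.log (Φ z * (4 - Φ z) / 4 * ‖η z‖ ^ 2) / 2
    ∀ z ∈ U, -Real.exp (-(2 * φ z)) * lap φ z = 1 := by
  intro φ z hz
  have hΦd : ∀ w ∈ U, DifferentiableAt ℝ Φ w := fun w hw =>
    (hΦsmooth.contDiffAt (hU.mem_nhds hw)).differentiableAt (by simp)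
  have hηda : ∀ w ∈ U, DifferentiableAt ℂ η w := fun w hw =>
    hη.differentiableAt (hU.mem_nhds hw)
  have hηan : AnalyticOnNhd ℂ η U := hη.analyticOnNhd hU
  set q : ℂ → ℂ := fun w => deriv η w / η w with hqdef
  have hqd : ∀ w ∈ U, DifferentiableAt ℂ q w := fun w hw =>
    ((hηan.deriv w hw).differentiableAt).div (hηda w hw) (hη0 w hw)
  have hpos : ∀ w ∈ U, 0 < Φ w := fun w hw => (hΦrange w hw).1
  have hlt : ∀ w ∈ U, Φ w < 4 := fun w hw => (hΦrange w hw).2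
  have hSpos : ∀ w ∈ U, 0 < (η w).re * (η w).re + (η w).im * (η w).im := by
    intro w hw
    have h0 : 0 < Complex.normSq (η w) := Complex.normSq_pos.2 (hη0 w hw)
    simpa [Complex.normSq_apply] using h0
  set ψ : ℂ → ℝ := fun u => (Real.log (Φ u) + Real.log (4 - Φ u)
      + Real.log ((η u).re * (η u).re + (η u).im * (η u).im)) * (2:ℝ)⁻¹
      - Real.log 2 with hψdef
  have hφψ : EqOn φ ψ U := by
    intro u hu
    have h1 : (0:ℝ) < Φ u := hpos u hu
    have h2 : (0:ℝ) < 4 - Φ u := by linarith [hlt u hu]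
    have h3 := hSpos u hu
    have habs : (‖η u‖) ^ 2
        = (η u).re * (η u).re + (η u).im * (η u).im := by
      rw [Complex.sq_norm, Complex.normSq_apply]
    show Real.log (Φ u * (4 - Φ u) / 4 * ‖η u‖ ^ 2) / 2 = ψ u
    rw [habs, hψdef]
    rw [Real.log_mul (by positivity) h3.ne', Real.log_div (by positivity) (by norm_num),
      Real.log_mul h1.ne' h2.ne']
    have h4 : Real.log 4 = 2 * Real.log 2 := by
      rw [show (4:ℝ) = 2 ^ 2 by norm_num, Real.log_pow]; norm_num
    rw [h4]; ring
  have keyD : ∀ w ∈ U, ∀ v : ℂ,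
      fderiv ℝ φ w v = (2 - Φ w) / 2 * (η w * v).re + (q w * v).re := by
    intro w hw v
    have h1 : (0:ℝ) < Φ w := hpos w hw
    have h2 : (0:ℝ) < 4 - Φ w := by linarith [hlt w hw]
    have h3 := hSpos w hw
    have hΦf : HasFDerivAt Φ (fderiv ℝ Φ w) w := (hΦd w hw).hasFDerivAt
    have hA : HasFDerivAt (fun u => Real.log (Φ u)) ((Φ w)⁻¹ • fderiv ℝ Φ w) w :=
      (Real.hasDerivAt_log h1.ne').comp_hasFDerivAt w hΦf
    have hB0 : HasFDerivAt (fun u => (4:ℝ) - Φ u) (0 - fderiv ℝ Φ w) w :=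
      (hasFDerivAt_const (4:ℝ) w).sub hΦf
    have hB : HasFDerivAt (fun u => Real.log (4 - Φ u))
        ((4 - Φ w)⁻¹ • (0 - fderiv ℝ Φ w)) w :=
      by have h := (Real.hasDerivAt_log h2.ne').comp_hasFDerivAt w hB0; exact h
    have hηf : HasFDerivAt η
        (((1 : ℂ →L[ℂ] ℂ).smulRight (deriv η w)).restrictScalars ℝ) w :=
      ((hηda w hw).hasDerivAt.hasFDerivAt).restrictScalars ℝ
    have ha : HasFDerivAt (fun u => (η u).re)
        (Complex.reCLM.comp (((1 : ℂ →L[ℂ] ℂ).smulRight (deriv η w)).restrictScalars ℝ)) w :=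
      Complex.reCLM.hasFDerivAt.comp w hηf
    have hb : HasFDerivAt (fun u => (η u).im)
        (Complex.imCLM.comp (((1 : ℂ →L[ℂ] ℂ).smulRight (deriv η w)).restrictScalars ℝ)) w :=
      Complex.imCLM.hasFDerivAt.comp w hηf
    have hS := (ha.mul ha).add (hb.mul hb)
    have hC := (Real.hasDerivAt_log h3.ne').comp_hasFDerivAt w hS
    have hψf := (((hA.add hB).add hC).mul_const ((2:ℝ)⁻¹)).sub_const (Real.log 2)
    have hφf := hψf.congr_of_eventuallyEq
      (Filter.eventuallyEq_of_mem (hU.mem_nhds hw) hφψ)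
    rw [hφf.fderiv]
    have hqv : (q w * v).re = ((deriv η w * v).re * (η w).re
        + (deriv η w * v).im * (η w).im)
        / ((η w).re * (η w).re + (η w).im * (η w).im) := by
      have he : q w * v = deriv η w * v / η w := by
        rw [hqdef]; ring
      rw [he, Complex.div_re, Complex.normSq_apply]; ring
    simp only [ContinuousLinearMap.sub_apply, ContinuousLinearMap.add_apply,
      ContinuousLinearMap.smul_apply, ContinuousLinearMap.comp_apply,
      ContinuousLinearMap.coe_restrictScalars', ContinuousLinearMap.smulRight_apply,
      ContinuousLinearMap.one_apply, Complex.reCLM_apply, Complex.imCLM_apply,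
      smul_eq_mul, ContinuousLinearMap.zero_apply, ContinuousLinearMap.coe_smul',
      Pi.smul_apply]
    rw [hODE w hw v, hqv]
    simp only [Complex.mul_re, Complex.mul_im, Complex.smul_re, Complex.smul_im]
    field_simp
    ring
  have keyD2 : ∀ v : ℂ, fderiv ℝ (fun w => fderiv ℝ φ w v) z v
      = -(Φ z * (4 - Φ z) / 4) * (η z * v).re * (η z * v).re
        + (2 - Φ z) / 2 * (v * (deriv η z * v)).re + (v * (deriv q z * v)).re := by
    intro v
    have heq : (fun w => fderiv ℝ φ w v)
        =ᶠ[nhds z] (fun w => (2 - Φ w) / 2 * (η w * v).re + (q w * v).re) :=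
      Filter.eventuallyEq_of_mem (hU.mem_nhds hz) (fun w hw => keyD w hw v)
    rw [heq.fderiv_eq]
    have hΦf : HasFDerivAt Φ (fderiv ℝ Φ z) z := (hΦd z hz).hasFDerivAt
    have hr := ((hasFDerivAt_const (2:ℝ) z).sub hΦf).mul_const ((2:ℝ)⁻¹)
    have hsf : HasFDerivAt (fun u => (η u * v).re)
        (Complex.reCLM.comp (((1 : ℂ →L[ℂ] ℂ).smulRight (deriv η z * v)).restrictScalars ℝ)) z :=
      Complex.reCLM.hasFDerivAt.comp z
        ((((hηda z hz).hasDerivAt.mul_const v).hasFDerivAt).restrictScalars ℝ)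
    have hqf : HasFDerivAt (fun u => (q u * v).re)
        (Complex.reCLM.comp (((1 : ℂ →L[ℂ] ℂ).smulRight (deriv q z * v)).restrictScalars ℝ)) z :=
      Complex.reCLM.hasFDerivAt.comp z
        ((((hqd z hz).hasDerivAt.mul_const v).hasFDerivAt).restrictScalars ℝ)
    have hrw : ∀ u : ℂ, (2 - Φ u) / 2 * (η u * v).re + (q u * v).re
        = (2 - Φ u) * (2:ℝ)⁻¹ * (η u * v).re + (q u * v).re := by
      intro u; ring
    have htot := (hr.mul hsf).add hqf
    rw [funext hrw, HasFDerivAt.fderiv (f := fun x => (2 - Φ x) * (2:ℝ)⁻¹ * (η x * v).re + (q x * v).re) htot]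
    simp only [ContinuousLinearMap.add_apply, ContinuousLinearMap.smul_apply,
      ContinuousLinearMap.comp_apply, ContinuousLinearMap.coe_restrictScalars',
      ContinuousLinearMap.smulRight_apply, ContinuousLinearMap.one_apply,
      Complex.reCLM_apply, smul_eq_mul, ContinuousLinearMap.sub_apply,
      ContinuousLinearMap.zero_apply, ContinuousLinearMap.coe_smul', Pi.smul_apply, Pi.sub_apply]
    rw [hODE z hz v]
    simp only [Complex.mul_re, Complex.mul_im, Complex.smul_re, Complex.smul_im]
    ring
  have hlap : lap φ z = -(Φ z * (4 - Φ z) / 4)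
      * ((η z).re * (η z).re + (η z).im * (η z).im) := by
    unfold lap
    rw [keyD2 1, keyD2 Complex.I]
    simp only [Complex.mul_re, Complex.mul_im, Complex.I_re, Complex.I_im,
      Complex.one_re, Complex.one_im]
    ring
  have h1 : (0:ℝ) < Φ z := hpos z hz
  have h2 : (0:ℝ) < 4 - Φ z := by linarith [hlt z hz]
  have h3 := hSpos z hz
  have habs : (‖η z‖) ^ 2 = (η z).re * (η z).re + (η z).im * (η z).im := by
    rw [Complex.sq_norm, Complex.normSq_apply]
  have hGpos : 0 < Φ z * (4 - Φ z) / 4 * ‖η z‖ ^ 2 := by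
    rw [habs]; positivity
  have h2φ : 2 * φ z = Real.log (Φ z * (4 - Φ z) / 4 * ‖η z‖ ^ 2) := by
    show 2 * (Real.log (Φ z * (4 - Φ z) / 4 * ‖η z‖ ^ 2) / 2) = _
    ring
  rw [hlap, h2φ, Real.exp_neg, Real.exp_log hGpos, habs]
  field_simp
  exact div_self (by rw [sq, sq]; exact h3.ne')
end

section
/- Let Φ : U → (0,4) be a smooth function on an open set U ⊆ ℂ satisfying dΦ = (Φ(4−Φ)/4)(η dz + \overline{η} d\overline{z}) for a nonvanishing holomorphic function η on U. Then the conformal metric g = (4Φ(4−Φ)/(4−Φ)²)|η|² |dz|² has constant Gaussian curvature 0, i.e., is flat. -/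
open Complex Set

/-- The real-linear map `v ↦ (a * v).re`. -/
noncomputable def mulRe (a : ℂ) : ℂ →L[ℝ] ℝ :=
  Complex.reCLM.comp (((ContinuousLinearMap.id ℂ ℂ).smulRight a).restrictScalars ℝ)

@[simp] lemma mulRe_apply (a v : ℂ) : mulRe a v = (a * v).re := by
  simp [mulRe, mul_comm]

lemma lap_congr {f g : ℂ → ℝ} {z : ℂ} (h : f =ᶠ[nhds z] g) : lap f z = lap g z := by
  have h1 : fderiv ℝ f =ᶠ[nhds z] fderiv ℝ g := h.fderiv
  have h2 : (fun w => fderiv ℝ f w 1) =ᶠ[nhds z] fun w => fderiv ℝ g w 1 :=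
    h1.mono fun w hw => by simp only [hw]
  have h3 : (fun w => fderiv ℝ f w Complex.I) =ᶠ[nhds z] fun w => fderiv ℝ g w Complex.I :=
    h1.mono fun w hw => by simp only [hw]
  unfold lap
  rw [h2.fderiv_eq, h3.fderiv_eq]

lemma lap_eq_zero_of (F : ℂ → ℝ) (G : ℂ → ℂ) (z : ℂ)
    (hG : DifferentiableAt ℂ G z)
    (hF : ∀ᶠ w in nhds z, HasFDerivAt F (mulRe (G w)) w) :
    lap F z = 0 := by
  have h1 : (fun w => fderiv ℝ F w 1) =ᶠ[nhds z] fun w => (G w * 1).re :=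
    hF.mono fun w hw => by simp only [hw.fderiv, mulRe_apply]
  have hI : (fun w => fderiv ℝ F w Complex.I) =ᶠ[nhds z] fun w => (G w * Complex.I).re :=
    hF.mono fun w hw => by simp only [hw.fderiv, mulRe_apply]
  have hd : ∀ a : ℂ, HasFDerivAt (fun w => (G w * a).re) (mulRe (deriv G z * a)) z := by
    intro a
    have h0 : HasDerivAt (fun w => G w * a) (deriv G z * a) z :=
      hG.hasDerivAt.mul_const a
    have h1 : HasFDerivAt (fun w => G w * a)
        (((1 : ℂ →L[ℂ] ℂ).smulRight (deriv G z * a)).restrictScalars ℝ) z :=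
      h0.hasFDerivAt.restrictScalars ℝ
    have h2 := Complex.reCLM.hasFDerivAt.comp z h1
    have h3 : mulRe (deriv G z * a) = Complex.reCLM.comp
        (((1 : ℂ →L[ℂ] ℂ).smulRight (deriv G z * a)).restrictScalars ℝ) := by
      ext v
      simp [mulRe, mul_comm]
    rw [h3]
    exact h2
  unfold lap
  rw [h1.fderiv_eq, hI.fderiv_eq, (hd 1).fderiv, (hd Complex.I).fderiv]
  simp only [mulRe_apply, mul_one, mul_assoc, Complex.I_mul_I, mul_neg_one,
    Complex.neg_re]
  ring

/-- if `dΦ = (Φ(4−Φ)/4)(η dz + η̄ dz̄)` with `η` holomorphic nonvanishing,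
then the metric `(4Φ(4−Φ)/(4−Φ)²)|η|²|dz|²` has constant Gaussian curvature `0` (flat). -/
theorem stmt3 (U : Set ℂ) (hU : IsOpen U)
    (η : ℂ → ℂ) (hη : DifferentiableOn ℂ η U) (hη0 : ∀ z ∈ U, η z ≠ 0)
    (Φ : ℂ → ℝ) (hΦrange : ∀ z ∈ U, Φ z ∈ Ioo (0:ℝ) 4)
    (hΦsmooth : ContDiffOn ℝ (⊤ : ℕ∞) Φ U)
    (hODE : ∀ z ∈ U, ∀ v : ℂ,
      fderiv ℝ Φ z v = (Φ z * (4 - Φ z) / 2) * (η z * v).re) :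
    let φ : ℂ → ℝ := fun z =>
      Real.log (4 * Φ z * (4 - Φ z) / (4 - Φ z) ^ 2 * ‖η z‖ ^ 2) / 2
    ∀ z ∈ U, -Real.exp (-(2 * φ z)) * lap φ z = 0 := by
  intro φ z hz
  set c : ℂ := η z with hc
  have hcne : c ≠ 0 := hη0 z hz
  -- the open neighborhood V of z
  set V : Set ℂ := U ∩ {w | η w / c ∈ Complex.slitPlane} with hV
  have hVopen : IsOpen V := by
    refine (hη.continuousOn.div_const c).isOpen_inter_preimage hU Complex.isOpen_slitPlane
  have hzV : z ∈ V := by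
    refine ⟨hz, ?_⟩
    simp only [mem_setOf_eq, ← hc, div_self hcne]
    exact Complex.one_mem_slitPlane
  have hVU : V ⊆ U := inter_subset_left
  -- basic facts on V
  have hηne : ∀ w ∈ V, η w ≠ 0 := fun w hw => hη0 w (hVU hw)
  -- the comparison function F
  set F : ℂ → ℝ := fun w =>
    (Real.log 4 + Real.log (Φ w) - Real.log (4 - Φ w)
      + 2 * ((Complex.log (η w / c)).re + Real.log ‖c‖)) * (2⁻¹:ℝ) with hF
  -- φ = F on V
  have hφF : ∀ w ∈ V, φ w = F w := by
    intro w hw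
    have h0 : 0 < Φ w := (hΦrange w (hVU hw)).1
    have h4 : Φ w < 4 := (hΦrange w (hVU hw)).2
    have h4' : 0 < 4 - Φ w := by linarith
    have hne : η w ≠ 0 := hηne w hw
    have habs : 0 < ‖η w‖ := norm_pos_iff.mpr hne
    have habsc : 0 < ‖c‖ := norm_pos_iff.mpr hcne
    have harg : 4 * Φ w * (4 - Φ w) / (4 - Φ w) ^ 2 = 4 * Φ w / (4 - Φ w) := by
      rw [pow_two]
      field_simp
    have hlogre : (Complex.log (η w / c)).re
        = Real.log ‖η w‖ - Real.log ‖c‖ := by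
      rw [Complex.log_re, norm_div, Real.log_div habs.ne' habsc.ne']
    simp only [φ, F, harg, hlogre]
    rw [Real.log_mul (by positivity) (pow_ne_zero _ habs.ne'),
      Real.log_div (by positivity) (by positivity),
      Real.log_mul (by norm_num) h0.ne', Real.log_pow]
    push_cast
    ring
  have hφF' : φ =ᶠ[nhds z] F := by
    filter_upwards [hVopen.mem_nhds hzV] with w hw using hφF w hw
  -- the complex "gradient" function
  set G : ℂ → ℂ := fun w => η w + deriv η w / η w with hG
  -- G is complex differentiable at z
  have hηan : AnalyticOnNhd ℂ η U := hη.analyticOnNhd hU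
  have hηderiv : DifferentiableAt ℂ (deriv η) z := ((hηan.deriv) z hz).differentiableAt
  have hηdz : DifferentiableAt ℂ η z := (hηan z hz).differentiableAt
  have hGdiff : DifferentiableAt ℂ G z :=
    hηdz.add (hηderiv.div hηdz (hη0 z hz))
  -- F has derivative mulRe (G w) at every w ∈ V
  have hFderiv : ∀ w ∈ V, HasFDerivAt F (mulRe (G w)) w := by
    intro w hw
    have hwU : w ∈ U := hVU hw
    have h0 : 0 < Φ w := (hΦrange w hwU).1
    have h4 : Φ w < 4 := (hΦrange w hwU).2
    have h4' : 0 < 4 - Φ w := by linarith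
    have hne : η w ≠ 0 := hηne w hw
    -- Φ differentiable at w
    have hΦd : HasFDerivAt Φ (fderiv ℝ Φ w) w :=
      (((hΦsmooth.differentiableOn (by simp)) w hwU).differentiableAt
        (hU.mem_nhds hwU)).hasFDerivAt
    have hlog1 : HasFDerivAt (fun w => Real.log (Φ w)) ((Φ w)⁻¹ • fderiv ℝ Φ w) w :=
      hΦd.log h0.ne'
    have h4Φ : HasFDerivAt (fun w => 4 - Φ w) ((0 : ℂ →L[ℝ] ℝ) - fderiv ℝ Φ w) w :=
      (hasFDerivAt_const (4:ℝ) w).sub hΦd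
    have hlog2 : HasFDerivAt (fun w => Real.log (4 - Φ w))
        ((4 - Φ w)⁻¹ • ((0 : ℂ →L[ℝ] ℝ) - fderiv ℝ Φ w)) w :=
      h4Φ.log h4'.ne'
    -- the complex log part
    have hηd : HasDerivAt η (deriv η w) w :=
      ((hη w hwU).differentiableAt (hU.mem_nhds hwU)).hasDerivAt
    have hdiv : HasDerivAt (fun w => η w / c) (deriv η w / c) w := hηd.div_const c
    have hclog : HasDerivAt (fun w => Complex.log (η w / c))
        ((deriv η w / c) / (η w / c)) w := hdiv.clog hw.2
    have hclogF : HasFDerivAt (fun w => Complex.log (η w / c))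
        (((1 : ℂ →L[ℂ] ℂ).smulRight ((deriv η w / c) / (η w / c))).restrictScalars ℝ) w :=
      hclog.hasFDerivAt.restrictScalars ℝ
    have hre : HasFDerivAt (fun w => (Complex.log (η w / c)).re)
        (Complex.reCLM.comp
          (((1 : ℂ →L[ℂ] ℂ).smulRight ((deriv η w / c) / (η w / c))).restrictScalars ℝ)) w :=
      Complex.reCLM.hasFDerivAt.comp w hclogF
    -- combine
    have hsum : HasFDerivAt F
        ((2⁻¹:ℝ) • ((0 : ℂ →L[ℝ] ℝ) + (Φ w)⁻¹ • fderiv ℝ Φ w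
          - (4 - Φ w)⁻¹ • ((0 : ℂ →L[ℝ] ℝ) - fderiv ℝ Φ w)
          + (2:ℝ) • (Complex.reCLM.comp
            (((1 : ℂ →L[ℂ] ℂ).smulRight ((deriv η w / c) / (η w / c))).restrictScalars ℝ)
            + (0 : ℂ →L[ℝ] ℝ)))) w := by
      have hA : HasFDerivAt (fun w => (Complex.log (η w / c)).re + Real.log ‖c‖)
          (Complex.reCLM.comp
            (((1 : ℂ →L[ℂ] ℂ).smulRight ((deriv η w / c) / (η w / c))).restrictScalars ℝ)
            + (0 : ℂ →L[ℝ] ℝ)) w :=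
        hre.add (hasFDerivAt_const _ w)
      have hB := (((hasFDerivAt_const (Real.log 4) w).add hlog1).sub hlog2).add
        (hA.const_mul (2:ℝ))
      exact hB.mul_const (2⁻¹:ℝ)
    convert hsum using 1
    refine ContinuousLinearMap.ext fun v => ?_
    have hODEv := hODE w hwU v
    have hdd : (deriv η w / c) / (η w / c) = deriv η w / η w := by
      field_simp
    have hGw : G w = η w + deriv η w / η w := rfl
    simp only [ContinuousLinearMap.add_apply, ContinuousLinearMap.sub_apply,
      ContinuousLinearMap.smul_apply, ContinuousLinearMap.zero_apply,
      ContinuousLinearMap.coe_comp', Function.comp_apply,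
      ContinuousLinearMap.coe_restrictScalars', ContinuousLinearMap.smulRight_apply,
      ContinuousLinearMap.one_apply, Complex.reCLM_apply, mulRe_apply,
      smul_eq_mul]
    rw [hODEv, hdd, hGw, add_mul, Complex.add_re,
      mul_comm v (deriv η w / η w)]
    have hΦne : Φ w ≠ 0 := h0.ne'
    have h4ne : (4:ℝ) - Φ w ≠ 0 := h4'.ne'
    field_simp
    ring
  -- conclude
  have hlapF : lap F z = 0 := by
    refine lap_eq_zero_of F G z hGdiff ?_
    filter_upwards [hVopen.mem_nhds hzV] with w hw using hFderiv w hw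
  have : lap φ z = 0 := by rw [lap_congr hφF', hlapF]
  rw [this, mul_zero]
end

section
/- Let Φ : U → (0,4) be a smooth function on an open set U ⊆ ℂ with Φ ≠ 2 everywhere, satisfying dΦ = (Φ(4−Φ)/4)(η dz + \overline{η} d\overline{z}) for a nonvanishing holomorphic function η on U. Then the conformal metric g = (4Φ(4−Φ)/(4−2Φ)²)|η|² |dz|² has constant Gaussian curvature −1. -/
open Complex Set

noncomputable def T (c : ℂ) : ℂ →L[ℝ] ℝ := Complex.reCLM.comp (c • (1 : ℂ →L[ℝ] ℂ))

@[simp] lemma T_apply (c v : ℂ) : T c v = (c * v).re := by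
  simp [T, smul_eq_mul]

set_option maxHeartbeats 2000000 in
/-- if `dΦ = (Φ(4−Φ)/4)(η dz + η̄ dz̄)` with `η` holomorphic nonvanishing,
then the metric `(4Φ(4−Φ)/(4−2Φ)²)|η|²|dz|²` has constant Gaussian curvature `-1`. -/
theorem stmt4 (U : Set ℂ) (hU : IsOpen U)
    (η : ℂ → ℂ) (hη : DifferentiableOn ℂ η U) (hη0 : ∀ z ∈ U, η z ≠ 0)
    (Φ : ℂ → ℝ) (hΦrange : ∀ z ∈ U, Φ z ∈ Ioo (0:ℝ) 4)
    (hΦsmooth : ContDiffOn ℝ (⊤ : ℕ∞) Φ U) (hΦ2 : ∀ z ∈ U, Φ z ≠ 2)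
    (hODE : ∀ z ∈ U, ∀ v : ℂ,
      fderiv ℝ Φ z v = (Φ z * (4 - Φ z) / 2) * (η z * v).re) :
    let φ : ℂ → ℝ := fun z =>
      Real.log (4 * Φ z * (4 - Φ z) / (4 - 2 * Φ z) ^ 2 * ‖η z‖ ^ 2) / 2
    ∀ z ∈ U, -Real.exp (-(2 * φ z)) * lap φ z = -1 := by
  intro φ
  have hηa : AnalyticOnNhd ℂ η U := hη.analyticOnNhd hU
  have hden : ∀ w ∈ U, (4 - 2 * Φ w) ≠ 0 := fun w hw h => hΦ2 w hw (by linarith)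
  have hNpos : ∀ w ∈ U, 0 < Complex.normSq (η w) := fun w hw =>
    Complex.normSq_pos.2 (hη0 w hw)
  have hΦd : ∀ w ∈ U, HasFDerivAt Φ ((Φ w * (4 - Φ w) / 2) • T (η w)) w := by
    intro w hw
    have hd : DifferentiableAt ℝ Φ w :=
      (hΦsmooth.contDiffAt (hU.mem_nhds hw)).differentiableAt (by simp)
    have he : fderiv ℝ Φ w = (Φ w * (4 - Φ w) / 2) • T (η w) :=
      ContinuousLinearMap.ext fun v => by simp [hODE w hw v]
    exact he ▸ hd.hasFDerivAt
  have hηd : ∀ w ∈ U, HasFDerivAt η ((deriv η w) • (1 : ℂ →L[ℝ] ℂ)) w := fun w hw =>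
    ((hη.differentiableAt (hU.mem_nhds hw)).hasDerivAt).complexToReal_fderiv
  have hη'd : ∀ w ∈ U, HasFDerivAt (deriv η) ((deriv (deriv η) w) • (1 : ℂ →L[ℝ] ℂ)) w :=
    fun w hw => (((hηa.deriv w hw).differentiableAt).hasDerivAt).complexToReal_fderiv
  set g : ℂ → ℂ := fun w =>
    ((4 / (4 - 2 * Φ w) : ℝ)) • η w
      + ((Complex.normSq (η w))⁻¹ : ℝ) • (deriv η w * star (η w)) with hg
  have hφd : ∀ w ∈ U, HasFDerivAt φ (T (g w)) w := by
    intro w hw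
    have hΦw := hΦrange w hw
    have e1 : φ = fun z =>
        2⁻¹ * Real.log (4 * Φ z * (4 - Φ z) * ((4 - 2 * Φ z) * (4 - 2 * Φ z))⁻¹
          * (η z * star (η z)).re) := by
      funext z
      show Real.log _ / 2 = _
      rw [Complex.sq_norm, Complex.star_def, Complex.mul_conj, Complex.ofReal_re,
        div_eq_mul_inv (Real.log _), mul_comm]
      congr 1
      ring_nf
    rw [e1]
    have h1 := (((hΦd w hw).const_mul 4).mul ((hasFDerivAt_const (4:ℝ) w).sub (hΦd w hw)))
    have hsub := (hasFDerivAt_const (4:ℝ) w).sub ((hΦd w hw).const_mul 2)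
    have h2 := hsub.mul hsub
    have h2i := (hasDerivAt_inv (mul_ne_zero (hden w hw) (hden w hw))).comp_hasFDerivAt w h2
    have h3 := h1.mul h2i
    have hmulc := (hηd w hw).mul (hηd w hw).star
    have hre := Complex.reCLM.hasFDerivAt.comp w hmulc
    have h4 := h3.mul hre
    have hApos : 0 < 4 * Φ w * (4 - Φ w) * ((4 - 2 * Φ w) * (4 - 2 * Φ w))⁻¹
        * (η w * star (η w)).re := by
      have hns : (η w * star (η w)).re = Complex.normSq (η w) := by
        rw [Complex.star_def, Complex.mul_conj]; simp
      rw [hns]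
      have h2' : (0:ℝ) < (4 - 2 * Φ w) * (4 - 2 * Φ w) := by
        rcases (hden w hw).lt_or_gt with h | h
        · exact mul_pos_of_neg_of_neg h h
        · exact mul_pos h h
      have hnp := hNpos w hw
      have hp : 0 < 4 * Φ w * (4 - Φ w) := by nlinarith [hΦw.1, hΦw.2]
      positivity
    have h5 := (h4.log hApos.ne').const_mul (2:ℝ)⁻¹
    refine h5.congr_fderiv (ContinuousLinearMap.ext fun v => ?_)
    simp only [ContinuousLinearMap.add_apply, ContinuousLinearMap.smul_apply,
      ContinuousLinearMap.comp_apply, ContinuousLinearMap.coe_smul', Pi.smul_apply,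
      ContinuousLinearMap.sub_apply, ContinuousLinearMap.zero_apply, T_apply,
      ContinuousLinearMap.one_apply, smul_eq_mul, Complex.reCLM_apply]
    simp only [hg, Complex.real_smul, Complex.star_def, Complex.add_re, Complex.mul_re,
      Complex.mul_im, Complex.add_im, Complex.conj_re, Complex.conj_im, Complex.ofReal_re,
      Complex.ofReal_im, Complex.normSq_apply, Function.comp_apply, Complex.reCLM_apply,
      starL'_apply, Pi.mul_apply, Pi.sub_apply, ContinuousLinearEquiv.coe_coe]
    have hd0 := hden w hw
    have hN0 : (η w).re * (η w).re + (η w).im * (η w).im ≠ 0 := by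
      have := hNpos w hw; rw [Complex.normSq_apply] at this; exact this.ne'
    have hΦ0 : Φ w ≠ 0 := hΦw.1.ne'
    have hΦ4 : (4 : ℝ) - Φ w ≠ 0 := by have := hΦw.2; intro h; linarith
    have hN0' : (η w).re ^ 2 + (η w).im ^ 2 ≠ 0 := by rw [sq, sq]; exact hN0
    field_simp
    ring_nf
    field_simp
    ring
  -- second derivative at z
  intro z hz
  have hΦz := hΦrange z hz
  have hsub := (hasFDerivAt_const (4:ℝ) z).sub ((hΦd z hz).const_mul 2)
  have hinv := (hasDerivAt_inv (hden z hz)).comp_hasFDerivAt z hsub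
  have hc1 := hinv.const_mul (4:ℝ)
  have hsmul1 := hc1.smul (hηd z hz)
  have hmulc := (hηd z hz).mul (hηd z hz).star
  have hre0 := Complex.reCLM.hasFDerivAt.comp z hmulc
  have e2 : (fun w => Complex.normSq (η w)) = (⇑Complex.reCLM ∘ (η * fun x => star (η x))) := by
    funext w
    simp [Complex.star_def, Complex.mul_conj]
  rw [← e2] at hre0
  have hNi := (hasDerivAt_inv (hNpos z hz).ne').comp_hasFDerivAt z hre0
  have hmul2 := (hη'd z hz).mul (hηd z hz).star
  have hsmul2 := hNi.smul hmul2
  have hgd0 := hsmul1.add hsmul2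
  have hgd := hgd0.congr_of_eventuallyEq (show g =ᶠ[nhds z] _ from
    Filter.Eventually.of_forall fun w => by
      simp only [hg, Function.comp_apply, div_eq_mul_inv, Pi.add_apply, Pi.smul_apply', Pi.sub_apply, Pi.mul_apply])
  have hM1 := Complex.reCLM.hasFDerivAt.comp z hgd
  have hgI := hgd.mul_const Complex.I
  have hM2 := Complex.reCLM.hasFDerivAt.comp z hgI
  have key1 : fderiv ℝ (fun w => fderiv ℝ φ w 1) z = fderiv ℝ (⇑Complex.reCLM ∘ g) z := by
    apply Filter.EventuallyEq.fderiv_eq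
    filter_upwards [hU.mem_nhds hz] with w hw
    rw [(hφd w hw).fderiv]
    simp
  have key2 : fderiv ℝ (fun w => fderiv ℝ φ w Complex.I) z
      = fderiv ℝ (⇑Complex.reCLM ∘ fun w => g w * Complex.I) z := by
    apply Filter.EventuallyEq.fderiv_eq
    filter_upwards [hU.mem_nhds hz] with w hw
    rw [(hφd w hw).fderiv]
    simp
  have hlap : lap φ z = 4 * Φ z * (4 - Φ z) / (4 - 2 * Φ z) ^ 2 * Complex.normSq (η z) := by
    rw [lap, key1, key2, hM1.fderiv, hM2.fderiv]
    simp only [ContinuousLinearMap.add_apply, ContinuousLinearMap.smul_apply,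
      ContinuousLinearMap.comp_apply, ContinuousLinearMap.coe_smul', Pi.smul_apply,
      ContinuousLinearMap.sub_apply, ContinuousLinearMap.zero_apply, T_apply,
      ContinuousLinearMap.one_apply, smul_eq_mul, Complex.reCLM_apply,
      ContinuousLinearMap.smulRight_apply, Function.comp_apply, starL'_apply, Pi.mul_apply,
      ContinuousLinearEquiv.coe_coe]
    simp only [starL'_apply, Complex.star_def, Complex.real_smul, Complex.mul_re,
      Complex.mul_im, Complex.add_re, Complex.add_im, Complex.conj_re, Complex.conj_im,
      Complex.ofReal_re, Complex.ofReal_im, Complex.normSq_apply, Complex.I_re, Complex.I_im,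
      mul_one, mul_zero, zero_mul, sub_zero, zero_sub, one_mul, Complex.one_re, Complex.one_im,
      neg_neg, neg_zero, add_zero, zero_add]
    clear hM1 hM2 hgd hgd0 hgI hsmul1 hsmul2 hmul2 hmulc hNi hre0 hinv hsub hc1 key1 key2 hφd
    have hd0 := hden z hz
    have hN0 : (η z).re * (η z).re + (η z).im * (η z).im ≠ 0 := by
      have := hNpos z hz; rw [Complex.normSq_apply] at this; exact this.ne'
    field_simp
    ring
  have h2' : (0:ℝ) < (4 - 2 * Φ z) ^ 2 := pow_two_pos_of_ne_zero (hden z hz)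
  have hp : 0 < 4 * Φ z * (4 - Φ z) := by nlinarith [hΦz.1, hΦz.2]
  have hXpos : 0 < 4 * Φ z * (4 - Φ z) / (4 - 2 * Φ z) ^ 2 * Complex.normSq (η z) :=
    mul_pos (div_pos hp h2') (hNpos z hz)
  have hφz : φ z = Real.log (4 * Φ z * (4 - Φ z) / (4 - 2 * Φ z) ^ 2
      * Complex.normSq (η z)) / 2 := by
    show Real.log _ / 2 = _
    rw [Complex.sq_norm]
  rw [hlap, hφz]
  have he : 2 * (Real.log (4 * Φ z * (4 - Φ z) / (4 - 2 * Φ z) ^ 2 * Complex.normSq (η z)) / 2)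
      = Real.log (4 * Φ z * (4 - Φ z) / (4 - 2 * Φ z) ^ 2 * Complex.normSq (η z)) := by ring
  rw [he, Real.exp_neg, Real.exp_log hXpos, neg_mul, inv_mul_cancel₀ hXpos.ne']
end

section
/- Let t, s be monic complex polynomials of degree α ≥ 2 with nonzero constant terms, and suppose t'(z)s(z) − t(z)s'(z) = αμ z^{α−1} identically for some μ ∈ ℂ∖{0}. Then there exist ω₀, σ₀ ∈ ℂ∖{0} with σ₀ − ω₀ = μ such that t(z) = z^α + ω₀ and s(z) = z^α + σ₀. -/
open Polynomial

/-- if `t, s` are monic of degree `α ≥ 2` with nonzero constant terms and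
`t's − ts' = αμ X^{α−1}` with `μ ≠ 0`, then `t = X^α + ω₀`, `s = X^α + σ₀` with
`σ₀ − ω₀ = μ`. -/
theorem stmt5 (α : ℕ) (hα : 2 ≤ α) (t s : Polynomial ℂ)
    (ht : t.Monic) (hs : s.Monic)
    (htd : t.natDegree = α) (hsd : s.natDegree = α)
    (ht0 : t.coeff 0 ≠ 0) (hs0 : s.coeff 0 ≠ 0)
    (μ : ℂ) (hμ : μ ≠ 0)
    (heq : t.derivative * s - t * s.derivative = C ((α : ℂ) * μ) * X ^ (α - 1)) :
    ∃ ω₀ σ₀ : ℂ, ω₀ ≠ 0 ∧ σ₀ ≠ 0 ∧ σ₀ - ω₀ = μ ∧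
      t = X ^ α + C ω₀ ∧ s = X ^ α + C σ₀ := by
  have hαC : (α : ℂ) ≠ 0 := Nat.cast_ne_zero.mpr (by omega)
  set d : Polynomial ℂ := s - t with hd
  -- Wronskian identity for d
  have hW : t.derivative * d - t * d.derivative = C ((α : ℂ) * μ) * X ^ (α - 1) := by
    rw [hd, derivative_sub]
    ring_nf
    ring_nf at heq
    linear_combination heq
  have ht'coeff : t.derivative.coeff (α - 1) = (α : ℂ) := by
    rw [coeff_derivative]
    have h1 : α - 1 + 1 = α := by omega
    rw [h1]
    have h2 : t.coeff α = 1 := by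
      have := ht.coeff_natDegree
      rwa [htd] at this
    rw [h2, Nat.cast_sub (by omega : 1 ≤ α)]
    push_cast
    ring
  have hd0 : d ≠ 0 := by
    intro h
    rw [h] at hW
    simp only [mul_zero, derivative_zero, sub_zero] at hW
    have h2 : ((α : ℂ) * μ) = 0 := by
      have h3 := congrArg (fun p => p.coeff (α - 1)) hW.symm
      simp only [coeff_C_mul, coeff_X_pow, if_pos rfl, mul_one, coeff_zero, if_true] at h3
      exact h3
    exact mul_ne_zero hαC hμ h2
  have hdlt : d.natDegree < α := by
    have hdeg : d.degree < s.degree := by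
      apply degree_sub_lt
      · rw [degree_eq_natDegree hs.ne_zero, degree_eq_natDegree ht.ne_zero, htd, hsd]
      · exact hs.ne_zero
      · rw [hs.leadingCoeff, ht.leadingCoeff]
    rw [← hsd]
    exact (natDegree_lt_natDegree_iff hd0).mpr hdeg
  set m : ℕ := d.natDegree with hm
  -- show m = 0
  have hm0 : m = 0 := by
    by_contra hmne
    have hm1 : 1 ≤ m := Nat.one_le_iff_ne_zero.mpr hmne
    set c : ℂ := d.leadingCoeff with hc
    have hcne : c ≠ 0 := leadingCoeff_ne_zero.mpr hd0
    -- degree of derivative of d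
    have hd'coeff : d.derivative.coeff (m - 1) = (m : ℂ) * c := by
      rw [coeff_derivative]
      have h1 : m - 1 + 1 = m := by omega
      rw [h1, hc, leadingCoeff, ← hm, Nat.cast_sub hm1]
      push_cast
      ring
    have hd'ne : d.derivative.coeff (m - 1) ≠ 0 := by
      rw [hd'coeff]
      exact mul_ne_zero (Nat.cast_ne_zero.mpr hmne) hcne
    have hd'deg : d.derivative.natDegree = m - 1 :=
      le_antisymm (natDegree_derivative_le d) (le_natDegree_of_ne_zero hd'ne)
    have ht'deg : t.derivative.natDegree = α - 1 := by
      apply le_antisymm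
      · rw [← htd]; exact natDegree_derivative_le t
      · apply le_natDegree_of_ne_zero
        rw [ht'coeff]; exact hαC
    -- coefficient at N := (α-1) + m
    have hco1 : (t.derivative * d).coeff (α - 1 + m) = (α : ℂ) * c := by
      have := coeff_mul_degree_add_degree t.derivative d
      rw [ht'deg, ← hm] at this
      rw [this, leadingCoeff, ht'deg, ht'coeff]
    have hco2 : (t * d.derivative).coeff (α - 1 + m) = (m : ℂ) * c := by
      have := coeff_mul_degree_add_degree t d.derivative
      rw [htd, hd'deg] at this
      have he : α + (m - 1) = α - 1 + m := by omega
      rw [he] at this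
      rw [this, ht.leadingCoeff, one_mul, leadingCoeff, hd'deg, hd'coeff]
    have hrhs : (C ((α : ℂ) * μ) * X ^ (α - 1)).coeff (α - 1 + m) = 0 := by
      rw [coeff_C_mul, coeff_X_pow, if_neg (by omega)]
      ring
    have hkey : (α : ℂ) * c - (m : ℂ) * c = 0 := by
      rw [← hco1, ← hco2, ← coeff_sub, hW, hrhs]
    have : ((α : ℂ) - m) * c = 0 := by linear_combination hkey
    rcases mul_eq_zero.mp this with h | h
    · have h4 : (α : ℂ) = (m : ℂ) := by linear_combination h
      have : α = m := Nat.cast_inj.mp h4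
      omega
    · exact hcne h
  -- d is a constant
  have hdc : d = C (d.coeff 0) := eq_C_of_natDegree_eq_zero hm0
  set c : ℂ := d.coeff 0 with hc
  have hcne : c ≠ 0 := fun h => hd0 (by rw [hdc, h, map_zero])
  have hdc' : d.derivative = 0 := by rw [hdc]; simp
  have hW2 : C c * t.derivative = C ((α : ℂ) * μ) * X ^ (α - 1) := by
    rw [← hW, hdc']
    rw [hdc]
    ring
  -- compare coefficient at α - 1 to get c = μ
  have hcμ : c = μ := by
    have h := congrArg (fun p => p.coeff (α - 1)) hW2
    simp only [coeff_C_mul] at h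
    rw [ht'coeff, coeff_X_pow, if_pos rfl, mul_one] at h
    exact mul_left_cancel₀ hαC (by linear_combination h)
  -- t' = α X^(α-1)
  rw [hcμ] at hW2
  have htder : t.derivative = derivative (X ^ α : Polynomial ℂ) := by
    rw [derivative_X_pow]
    apply mul_left_cancel₀ (show C μ ≠ 0 from fun h => hμ (by simpa using h))
    rw [hW2, map_mul]
    ring
  have hder0 : derivative (t - X ^ α) = 0 := by
    rw [derivative_sub, htder, sub_self]
  have hnd0 : (t - X ^ α).natDegree = 0 := natDegree_eq_zero_of_derivative_eq_zero hder0
  have htX : t - X ^ α = C ((t - X ^ α).coeff 0) := eq_C_of_natDegree_eq_zero hnd0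
  have hcoeff0 : (t - X ^ α).coeff 0 = t.coeff 0 := by
    rw [coeff_sub, coeff_X_pow, if_neg (by omega)]
    ring
  have ht' : t = X ^ α + C (t.coeff 0) := by
    rw [← hcoeff0, ← htX]; ring
  have hseq : s = X ^ α + C (t.coeff 0 + μ) := by
    have hstd : s = t + d := by rw [hd]; ring
    rw [hstd, hdc, hcμ, map_add]
    conv_lhs => rw [ht']
    ring
  refine ⟨t.coeff 0, t.coeff 0 + μ, ht0, ?_, by ring, ht', hseq⟩
  intro h
  apply hs0
  rw [hseq, coeff_add, coeff_X_pow, if_neg (by omega), coeff_C, if_pos rfl, h]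
  ring
end

section
/- Let α ≥ 2 and suppose ω is a rational 1-form on ℂ of the shape ω = Σᵢ 1/(z−aᵢ) dz − Σᵢ 1/(z−bᵢ) dz with all aᵢ, bᵢ distinct and nonzero, which has a zero of order α−1 at z = 0 and a zero of order α−1 at z = ∞. Then after the substitution z = ω₀^{1/α} w (a linear change of coordinate), ω = α(a−1)w^{α−1}/((w^α+1)(w^α+a)) dw for some constant a ∈ ℂ∖{0,1}. -/
open Polynomial Finset in
private lemma logderiv_eval {ι : Type*} [DecidableEq ι] (s : Finset ι) (f : ι → ℂ) (z : ℂ)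
    (h : ∀ i ∈ s, z ≠ f i) :
    (Polynomial.derivative (∏ i ∈ s, (X - C (f i)))).eval z
      = (∏ i ∈ s, (z - f i)) * ∑ i ∈ s, 1 / (z - f i) := by
  induction s using Finset.induction_on with
  | empty => simp
  | @insert j s hj ih =>
    have hz : z - f j ≠ 0 := sub_ne_zero.mpr (h j (mem_insert_self _ _))
    have ih' := ih (fun i hi => h i (mem_insert_of_mem hi))
    rw [Finset.prod_insert hj, Finset.prod_insert hj, Finset.sum_insert hj,
      derivative_mul, derivative_sub, derivative_X, derivative_C, sub_zero, one_mul,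
      eval_add, eval_mul, eval_sub, eval_X, eval_C, ih', eval_prod]
    simp only [eval_sub, eval_X, eval_C]
    field_simp

/-- a rational 1-form `ω = (Σ 1/(z−aᵢ) − Σ 1/(z−bᵢ)) dz` with the `aᵢ, bᵢ`
distinct and nonzero, having a zero of order `α−1` at `0` and at `∞` (encoded as
`ω = αμ z^{α−1}/(∏(z−aᵢ)∏(z−bᵢ)) dz`, `μ ≠ 0`), becomes, after the substitution
`z = p w`, the form `α(a−1)w^{α−1}/((w^α+1)(w^α+a)) dw` for some `a ∈ ℂ∖{0,1}`. -/
theorem stmt7 (α : ℕ) (hα : 2 ≤ α) (a b : Fin α → ℂ)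
    (ha0 : ∀ i, a i ≠ 0) (hb0 : ∀ i, b i ≠ 0)
    (hdist : Function.Injective (Sum.elim a b : Fin α ⊕ Fin α → ℂ))
    (μ : ℂ) (hμ : μ ≠ 0)
    (hform : ∀ z : ℂ, (∀ i, z ≠ a i) → (∀ i, z ≠ b i) →
      (∑ i, 1 / (z - a i)) - (∑ i, 1 / (z - b i))
        = (α : ℂ) * μ * z ^ (α - 1) / ((∏ i, (z - a i)) * ∏ i, (z - b i))) :
    ∃ p : ℂ, p ≠ 0 ∧ ∃ a₀ : ℂ, a₀ ≠ 0 ∧ a₀ ≠ 1 ∧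
      ∀ w : ℂ, (w ^ α + 1) * (w ^ α + a₀) ≠ 0 →
        p * ((∑ i, 1 / (p * w - a i)) - ∑ i, 1 / (p * w - b i))
          = (α : ℂ) * (a₀ - 1) * w ^ (α - 1) / ((w ^ α + 1) * (w ^ α + a₀)) := by
  classical
  open Polynomial Finset in
  have hα0 : (α : ℂ) ≠ 0 := Nat.cast_ne_zero.mpr (by omega)
  obtain ⟨P, hPdef⟩ : ∃ P : ℂ[X], P = ∏ i, (X - C (a i)) := ⟨_, rfl⟩
  obtain ⟨Q, hQdef⟩ : ∃ Q : ℂ[X], Q = ∏ i, (X - C (b i)) := ⟨_, rfl⟩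
  have hPm : P.Monic := hPdef ▸ monic_prod_of_monic _ _ fun i _ => monic_X_sub_C _
  have hQm : Q.Monic := hQdef ▸ monic_prod_of_monic _ _ fun i _ => monic_X_sub_C _
  have hPd : P.natDegree = α := by
    rw [hPdef, natDegree_prod _ _ (fun i _ => X_sub_C_ne_zero _)]
    simp [natDegree_X_sub_C]
  have hQd : Q.natDegree = α := by
    rw [hQdef, natDegree_prod _ _ (fun i _ => X_sub_C_ne_zero _)]
    simp [natDegree_X_sub_C]
  have hPev : ∀ z : ℂ, P.eval z = ∏ i, (z - a i) := by
    intro z; rw [hPdef, eval_prod]; simp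
  have hQev : ∀ z : ℂ, Q.eval z = ∏ i, (z - b i) := by
    intro z; rw [hQdef, eval_prod]; simp
  -- Wronskian identity
  have key : derivative P * Q - P * derivative Q = C ((α : ℂ) * μ) * X ^ (α - 1) := by
    have hD : (derivative P * Q - P * derivative Q - C ((α : ℂ) * μ) * X ^ (α - 1)) = 0 := by
      apply Polynomial.eq_zero_of_infinite_isRoot
      have hfin : (Set.range a ∪ Set.range b).Finite :=
        (Set.finite_range a).union (Set.finite_range b)
      apply Set.Infinite.mono (s := (Set.range a ∪ Set.range b)ᶜ)
      · intro z hz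
        simp only [Set.mem_compl_iff, Set.mem_union, Set.mem_range, not_or, not_exists] at hz
        have hza : ∀ i, z ≠ a i := fun i h => hz.1 i h.symm
        have hzb : ∀ i, z ≠ b i := fun i h => hz.2 i h.symm
        have hPz : P.eval z ≠ 0 := by
          rw [hPev]; exact Finset.prod_ne_zero_iff.mpr fun i _ => sub_ne_zero.mpr (hza i)
        have hQz : Q.eval z ≠ 0 := by
          rw [hQev]; exact Finset.prod_ne_zero_iff.mpr fun i _ => sub_ne_zero.mpr (hzb i)
        have h1 : (derivative P).eval z = (∏ i, (z - a i)) * ∑ i, 1 / (z - a i) := by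
          rw [hPdef]; exact logderiv_eval Finset.univ a z (fun i _ => hza i)
        have h2 : (derivative Q).eval z = (∏ i, (z - b i)) * ∑ i, 1 / (z - b i) := by
          rw [hQdef]; exact logderiv_eval Finset.univ b z (fun i _ => hzb i)
        have h3 := hform z hza hzb
        rw [← hPev, ← hQev] at h3
        have h4 : ((∑ i, 1 / (z - a i)) - (∑ i, 1 / (z - b i))) * (P.eval z * Q.eval z)
            = (α : ℂ) * μ * z ^ (α - 1) := by
          rw [h3]; field_simp
        show Polynomial.IsRoot _ z
        simp only [IsRoot.def, eval_sub, eval_mul, eval_pow, eval_C, eval_X]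
        rw [h1, h2, ← hPev, ← hQev]
        linear_combination h4
      · exact Set.Infinite.mono (fun x hx => hx) hfin.infinite_compl
    linear_combination hD
  -- R := P - Q is a nonzero constant
  obtain ⟨R, hRdef⟩ : ∃ R : ℂ[X], R = P - Q := ⟨_, rfl⟩
  have hRne : R ≠ 0 := by
    intro h0
    have hPQ : P = Q := by rw [hRdef] at h0; rwa [sub_eq_zero] at h0
    rw [hPQ] at key
    have : C ((α : ℂ) * μ) * X ^ (α - 1) = 0 := by linear_combination -key
    exact (mul_ne_zero (C_ne_zero.mpr (mul_ne_zero hα0 hμ))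
      (pow_ne_zero _ Polynomial.X_ne_zero)) this
  have hW2 : derivative R * Q - R * derivative Q = C ((α : ℂ) * μ) * X ^ (α - 1) := by
    rw [hRdef, derivative_sub]; linear_combination key
  have hRdeg : R.natDegree < α := by
    rw [natDegree_lt_iff_degree_lt hRne]
    have h1 : P.degree = Q.degree := by
      rw [degree_eq_natDegree hPm.ne_zero, degree_eq_natDegree hQm.ne_zero, hPd, hQd]
    have := degree_sub_lt h1 hPm.ne_zero (by rw [hPm.leadingCoeff, hQm.leadingCoeff])
    rw [degree_eq_natDegree hPm.ne_zero, hPd] at this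
    rwa [hRdef]
  -- derivative of Q has degree α-1 with leading coefficient α
  have hcoQ' : (derivative Q).coeff (α - 1) = (α : ℂ) := by
    have e1 : α - 1 + 1 = α := by omega
    have hQα : Q.coeff α = 1 := by rw [← hQd]; exact hQm.coeff_natDegree
    rw [coeff_derivative, e1, hQα, one_mul]
    push_cast [Nat.cast_sub (by omega : 1 ≤ α)]
    ring
  have hQ'nd : (derivative Q).natDegree = α - 1 := by
    refine le_antisymm (by rw [← hQd]; exact natDegree_derivative_le Q) ?_
    exact le_natDegree_of_ne_zero (by rw [hcoQ']; exact hα0)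
  have hRd0 : R.natDegree = 0 := by
    by_contra hne
    have hd1 : 1 ≤ R.natDegree := Nat.one_le_iff_ne_zero.mpr hne
    have hr : R.coeff R.natDegree ≠ 0 := leadingCoeff_ne_zero.mpr hRne
    have hcoR' : (derivative R).coeff (R.natDegree - 1)
        = R.coeff R.natDegree * (R.natDegree : ℂ) := by
      have e1 : R.natDegree - 1 + 1 = R.natDegree := by omega
      rw [coeff_derivative, e1]
      congr 1
      push_cast [Nat.cast_sub hd1]
      ring
    have hR'nd : (derivative R).natDegree = R.natDegree - 1 := by
      refine le_antisymm (natDegree_derivative_le R) ?_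
      refine le_natDegree_of_ne_zero ?_
      rw [hcoR']
      exact mul_ne_zero hr (Nat.cast_ne_zero.mpr (by omega))
    -- compare coefficients at R.natDegree + α - 1
    have hc1 : (derivative R * Q).coeff (R.natDegree - 1 + α)
        = R.coeff R.natDegree * (R.natDegree : ℂ) := by
      have := coeff_mul_degree_add_degree (derivative R) Q
      rw [hR'nd, hQd] at this
      rw [this, hQm.leadingCoeff, leadingCoeff, hR'nd, hcoR', mul_one]
    have hc2 : (R * derivative Q).coeff (R.natDegree + (α - 1))
        = R.coeff R.natDegree * (α : ℂ) := by
      have := coeff_mul_degree_add_degree R (derivative Q)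
      rw [hQ'nd] at this
      rw [this, leadingCoeff, leadingCoeff, hQ'nd, hcoQ']
    have eidx : R.natDegree - 1 + α = R.natDegree + (α - 1) := by omega
    rw [eidx] at hc1
    have hc3 : (C ((α : ℂ) * μ) * X ^ (α - 1)).coeff (R.natDegree + (α - 1)) = 0 := by
      rw [coeff_C_mul, coeff_X_pow, if_neg (by omega)]
      ring
    have hc4 := congrArg (fun p => p.coeff (R.natDegree + (α - 1))) hW2
    simp only [coeff_sub, hc1, hc2, hc3] at hc4
    have : (R.natDegree : ℂ) = (α : ℂ) := by
      have := sub_eq_zero.mp hc4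
      exact mul_left_cancel₀ hr this
    have : R.natDegree = α := Nat.cast_injective this
    omega
  -- R = C r
  obtain ⟨r, hrC⟩ : ∃ r : ℂ, R = C r := ⟨R.coeff 0, eq_C_of_natDegree_eq_zero hRd0⟩
  have hrne : r ≠ 0 := fun h => hRne (by rw [hrC, h, map_zero])
  -- determine μ and derivative Q
  have hμr : μ = -r := by
    have hc := congrArg (fun p => p.coeff (α - 1)) hW2
    simp only [hrC, derivative_C, zero_mul, zero_sub, coeff_neg, coeff_C_mul, hcoQ',
      coeff_X_pow, if_pos rfl, eq_self_iff_true, if_true, mul_one] at hc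
    have h6 : (α : ℂ) * μ = (α : ℂ) * (-r) := by linear_combination -hc
    exact mul_left_cancel₀ hα0 h6
  have hQ' : derivative Q = C (α : ℂ) * X ^ (α - 1) := by
    have h5 : C r * (derivative Q) = C r * (C (α : ℂ) * X ^ (α - 1)) := by
      have : (0 : ℂ[X]) * Q - C r * derivative Q = C ((α : ℂ) * μ) * X ^ (α - 1) := by
        rw [← derivative_C (a := r), ← hrC]; exact hW2
      rw [hμr] at this
      have h8 : C ((α : ℂ) * -r) = -(C r * C (α : ℂ)) := by rw [C_mul, C_neg]; ring
      linear_combination -this - h8 * X ^ (α - 1)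
    exact mul_left_cancel₀ (C_ne_zero.mpr hrne) h5
  -- Q = X^α + C c
  have hQX : derivative (Q - X ^ α) = 0 := by
    rw [derivative_sub, hQ', derivative_X_pow, sub_self]
  obtain ⟨c, hc⟩ : ∃ c : ℂ, Q = X ^ α + C c := by
    have := eq_C_of_derivative_eq_zero hQX
    exact ⟨(Q - X ^ α).coeff 0, by linear_combination this⟩
  have hPc : P = X ^ α + C (c + r) := by
    have : P = Q + C r := by rw [← hrC, hRdef]; ring
    rw [this, hc, C_add]; ring
  -- define A, B
  obtain ⟨A, hA⟩ : ∃ A : ℂ, A = -(c + r) := ⟨_, rfl⟩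
  obtain ⟨B, hB⟩ : ∃ B : ℂ, B = -c := ⟨_, rfl⟩
  have hPevA : ∀ z : ℂ, (∏ i, (z - a i)) = z ^ α - A := by
    intro z
    rw [← hPev, hPc, hA]
    simp only [eval_add, eval_pow, eval_X, eval_C]
    ring
  have hQevB : ∀ z : ℂ, (∏ i, (z - b i)) = z ^ α - B := by
    intro z
    rw [← hQev, hc, hB]
    simp only [eval_add, eval_pow, eval_X, eval_C]
    ring
  have hAne : A ≠ 0 := by
    intro h0
    have h1 := hPevA 0
    rw [h0, zero_pow (by omega : α ≠ 0), zero_sub, neg_zero] at h1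
    have h2 : (∏ i, ((0 : ℂ) - a i)) ≠ 0 :=
      Finset.prod_ne_zero_iff.mpr fun i _ => by
        rw [zero_sub, neg_ne_zero]; exact ha0 i
    exact h2 h1
  have hBne : B ≠ 0 := by
    intro h0
    have h1 := hQevB 0
    rw [h0, zero_pow (by omega : α ≠ 0), zero_sub, neg_zero] at h1
    have h2 : (∏ i, ((0 : ℂ) - b i)) ≠ 0 :=
      Finset.prod_ne_zero_iff.mpr fun i _ => by
        rw [zero_sub, neg_ne_zero]; exact hb0 i
    exact h2 h1
  have hABne : A ≠ B := by
    intro h0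
    apply hrne
    rw [hA, hB] at h0
    linear_combination -h0
  have hμAB : μ = A - B := by rw [hμr, hA, hB]; ring
  -- choose p
  obtain ⟨p, hp⟩ := IsAlgClosed.exists_pow_nat_eq (-A) (by omega : 0 < α)
  have hpne : p ≠ 0 := by
    intro h0; apply hAne
    rw [h0, zero_pow (by omega : α ≠ 0)] at hp
    linear_combination hp
  refine ⟨p, hpne, B / A, div_ne_zero hBne hAne, ?_, ?_⟩
  · intro h1
    exact hABne ((div_eq_one_iff_eq hAne).mp h1).symm
  intro w hw
  have hw1 : w ^ α + 1 ≠ 0 := left_ne_zero_of_mul hw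
  have hw2 : w ^ α + B / A ≠ 0 := right_ne_zero_of_mul hw
  have hPw : (∏ i, (p * w - a i)) = -A * (w ^ α + 1) := by
    rw [hPevA, mul_pow, hp]; ring
  have hQw : (∏ i, (p * w - b i)) = -A * (w ^ α + B / A) := by
    rw [hQevB, mul_pow, hp]; field_simp; ring
  have hza : ∀ i, p * w ≠ a i := by
    intro i h0
    have : (∏ i, (p * w - a i)) = 0 :=
      Finset.prod_eq_zero (Finset.mem_univ i) (by rw [h0]; ring)
    rw [hPw] at this
    exact (mul_ne_zero (neg_ne_zero.mpr hAne) hw1) this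
  have hzb : ∀ i, p * w ≠ b i := by
    intro i h0
    have : (∏ i, (p * w - b i)) = 0 :=
      Finset.prod_eq_zero (Finset.mem_univ i) (by rw [h0]; ring)
    rw [hQw] at this
    exact (mul_ne_zero (neg_ne_zero.mpr hAne) hw2) this
  rw [hform (p * w) hza hzb, hPw, hQw, hμAB, mul_pow]
  have hpp : p ^ (α - 1) * p = -A := by
    rw [← pow_succ, show α - 1 + 1 = α from by omega, hp]
  have hAt : A * (B / A) = B := mul_div_cancel₀ B hAne
  have hd1 : (-A * (w ^ α + 1)) * (-A * (w ^ α + B / A)) ≠ 0 :=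
    mul_ne_zero (mul_ne_zero (neg_ne_zero.mpr hAne) hw1)
      (mul_ne_zero (neg_ne_zero.mpr hAne) hw2)
  rw [mul_div_assoc' p _ _, div_eq_div_iff hd1 hw]
  linear_combination ((α : ℂ) * (w ^ (α - 1)) * ((w ^ α + 1) * (w ^ α + B / A)) * (A - B)) * hpp
    - ((α : ℂ) * (w ^ (α - 1)) * ((w ^ α + 1) * (w ^ α + B / A)) * A) * hAt
end

section
/- Every conformal metric on ℂ∖{0} of the form g = 4α²λ²|a−1|²|z|^{2(α−1)}/(|z^α+a|²+λ²|z^α+1|²)² |dz|² with α ≥ 1 an integer, λ > 0, a ∈ ℂ∖{0,1}, equals, after a linear change of coordinate z = p w with suitable p ∈ ℂ∖{0}, the metric 4α²|w|^{2(α−1)}/(1+|w^α+b|²)² |dw|² for some b ∈ ℝ. -/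
/-!
Pulling back along `z = p w` turns `|z|^{2(α-1)} |dz|²` into `|p^α|² |w|^{2(α-1)} |dw|²`, so with
`q = p^α` and `s = w^α` it suffices that `|q s + a|² + λ² |q s + 1|²` be a constant multiple of
`1 + |s + b|²`. The cross term of the left side is `2 Re (s q conj (a + λ²))`, so `b` is real as soon
as `q conj (a + λ²) ≥ 0`; this fixes `arg q`, and `|q| = λ |a - 1| / (1 + λ²)` makes the constants
match thanks to `λ² |a - 1|² + |a + λ²|² = (1 + λ²)(|a|² + λ²)`.
-/

open Complex ComplexConjugate

theorem Complex.exists_norm_eq_mul_conj_eq (u : ℂ) {r : ℝ} (hr : 0 ≤ r) :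
    ∃ q : ℂ, ‖q‖ = r ∧ q * conj u = (r * ‖u‖ : ℝ) := by
  refine ⟨r * exp (arg u * I), by simp [abs_of_nonneg hr], ?_⟩
  have hconj : conj u = ‖u‖ * exp (-(arg u * I)) := by
    nth_rw 1 [← norm_mul_exp_arg_mul_I u]
    rw [map_mul, ← exp_conj]
    simp
  rw [hconj, mul_mul_mul_comm, ← exp_add, add_neg_cancel, exp_zero]
  push_cast
  ring

theorem Complex.mul_sq_norm_sub_one_add_sq_norm_add (a : ℂ) (t : ℝ) :
    t * ‖a - 1‖ ^ 2 + ‖a + t‖ ^ 2 = (1 + t) * (‖a‖ ^ 2 + t) := by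
  simp only [← normSq_eq_norm_sq, normSq_apply, sub_re, sub_im, add_re, add_im, ofReal_re,
    ofReal_im, one_re, one_im]
  ring

theorem Complex.sq_norm_mul_add_add_mul_sq_norm_mul_add_one {a q : ℂ} {t b C : ℝ}
    (hq : (1 + t) * ‖q‖ ^ 2 = C) (hqa : q * conj (a + t) = (C * b : ℝ))
    (hC : C * (1 + b ^ 2) = ‖a‖ ^ 2 + t) (s : ℂ) :
    ‖q * s + a‖ ^ 2 + t * ‖q * s + 1‖ ^ 2 = C * (1 + ‖s + b‖ ^ 2) := by
  have hre := congrArg re hqa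
  have him := congrArg im hqa
  simp only [mul_re, mul_im, conj_re, conj_im, add_re, add_im, ofReal_re, ofReal_im] at hre him
  simp only [← normSq_eq_norm_sq, normSq_apply, mul_re, mul_im, add_re, add_im, ofReal_re,
    ofReal_im, one_re, one_im] at hq hC ⊢
  linear_combination (s.re ^ 2 + s.im ^ 2) * hq + 2 * s.re * hre - 2 * s.im * him - hC

theorem norm_mul_zpow_mul_sq_norm {𝕜 : Type*} [NormedDivisionRing 𝕜] {p : 𝕜} (hp : p ≠ 0)
    (w : 𝕜) (n : ℕ) :
    ‖p * w‖ ^ (2 * ((n : ℤ) - 1)) * ‖p‖ ^ 2 = ‖p ^ n‖ ^ 2 * ‖w‖ ^ (2 * ((n : ℤ) - 1)) := by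
  have hp' : ‖p‖ ≠ 0 := norm_ne_zero_iff.mpr hp
  rw [norm_mul, mul_zpow, mul_right_comm, ← zpow_natCast ‖p‖ 2, ← zpow_add₀ hp', norm_pow,
    ← zpow_natCast, ← zpow_natCast, ← zpow_mul]
  ring_nf

theorem stmt14_general (α : ℕ) (hα : 1 ≤ α) (lam : ℝ) (hlam : 0 < lam)
    (a : ℂ) (ha1 : a ≠ 1) :
    let ρ : ℂ → ℝ := fun z =>
      4 * (α : ℝ) ^ 2 * lam ^ 2 * ‖a - 1‖ ^ 2 *
        ‖z‖ ^ (2 * (α - 1 : ℤ)) /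
        (‖z ^ α + a‖ ^ 2 + lam ^ 2 * ‖z ^ α + 1‖ ^ 2) ^ 2
    ∃ p : ℂ, p ≠ 0 ∧ ∃ b : ℝ,
      ∀ w : ℂ, w ≠ 0 →
        ρ (p * w) * ‖p‖ ^ 2
          = 4 * (α : ℝ) ^ 2 * ‖w‖ ^ (2 * (α - 1 : ℤ)) /
              (1 + ‖w ^ α + (b : ℂ)‖ ^ 2) ^ 2 := by
  intro ρ
  have hA : 0 < ‖a - 1‖ := norm_pos_iff.mpr (sub_ne_zero.mpr ha1)
  set c := lam * ‖a - 1‖ / (1 + lam ^ 2)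
  have hc : 0 < c := by positivity
  set u : ℂ := a + (lam ^ 2 : ℝ)
  obtain ⟨q, hq, hqu⟩ := exists_norm_eq_mul_conj_eq u hc.le
  set C := (1 + lam ^ 2) * c ^ 2
  set b := ‖u‖ / (lam * ‖a - 1‖)
  have hden := sq_norm_mul_add_add_mul_sq_norm_mul_add_one (C := C) (b := b) (by rw [hq])
    (by rw [hqu]; congr 1; simp only [C, b, c]; field_simp)
    (by
      simp only [C, b, c]
      field_simp
      linear_combination mul_sq_norm_sub_one_add_sq_norm_add a (lam ^ 2))
  obtain ⟨p, hp⟩ := IsAlgClosed.exists_pow_nat_eq q hα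
  have hp0 : p ≠ 0 := by
    rintro rfl
    rw [zero_pow (by omega), eq_comm, ← norm_eq_zero, hq] at hp
    exact hc.ne' hp
  refine ⟨p, hp0, b, fun w _ => ?_⟩
  calc ρ (p * w) * ‖p‖ ^ 2
      = 4 * α ^ 2 * lam ^ 2 * ‖a - 1‖ ^ 2 * (‖p * w‖ ^ (2 * ((α : ℤ) - 1)) * ‖p‖ ^ 2) /
          (‖(p * w) ^ α + a‖ ^ 2 + lam ^ 2 * ‖(p * w) ^ α + 1‖ ^ 2) ^ 2 := by
        simp only [ρ]; ring
    _ = 4 * α ^ 2 * lam ^ 2 * ‖a - 1‖ ^ 2 * (c ^ 2 * ‖w‖ ^ (2 * ((α : ℤ) - 1))) /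
          (C * (1 + ‖w ^ α + b‖ ^ 2)) ^ 2 := by
        rw [norm_mul_zpow_mul_sq_norm hp0, hp, hq, mul_pow, hp, hden]
    _ = 4 * α ^ 2 * ‖w‖ ^ (2 * ((α : ℤ) - 1)) / (1 + ‖w ^ α + b‖ ^ 2) ^ 2 := by
        simp only [C, c]; field_simp

/-- the metric `4α²λ²|a−1|²|z|^{2(α−1)}/(|z^α+a|²+λ²|z^α+1|²)² |dz|²`
becomes, under a suitable linear coordinate change `z = p w`,
`4α²|w|^{2(α−1)}/(1+|w^α+b|²)² |dw|²` with `b ∈ ℝ`. -/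
theorem stmt14 (α : ℕ) (hα : 1 ≤ α) (lam : ℝ) (hlam : 0 < lam)
    (a : ℂ) (ha0 : a ≠ 0) (ha1 : a ≠ 1) :
    let ρ : ℂ → ℝ := fun z =>
      4 * (α : ℝ) ^ 2 * lam ^ 2 * ‖a - 1‖ ^ 2 *
        ‖z‖ ^ (2 * (α - 1 : ℤ)) /
        (‖z ^ α + a‖ ^ 2 + lam ^ 2 * ‖z ^ α + 1‖ ^ 2) ^ 2
    ∃ p : ℂ, p ≠ 0 ∧ ∃ b : ℝ,
      ∀ w : ℂ, w ≠ 0 →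
        ρ (p * w) * ‖p‖ ^ 2
          = 4 * (α : ℝ) ^ 2 * ‖w‖ ^ (2 * (α - 1 : ℤ)) /
              (1 + ‖w ^ α + (b : ℂ)‖ ^ 2) ^ 2 :=
  stmt14_general α hα lam hlam a ha1
end
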